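/- arXiv:1205.6956 — 5 statements merged into one kernel-verified Lean document; each statement's English description precedes it below -/
import Mathlib

section
/- For all nonnegative integers i, n and every integer l ≥ 1, the finite differences of power functions satisfy the exact recurrence ∇^l i^{n+1} = (l+i)·∇^l i^n + l·∇^{l−1} i^n. -/
/-!
Writing `j = i + k = (l + i) - (l - k)` in the `k`-th term of `∇^l (j g(j))` at `i` splits it into
`(l + i) ∇^l g(i)` and a correction with weights `(l - k) C(l, k) = l C(l - 1, k)`, which is
`l ∇^{l-1} g(i)`. The recurrence for powers is the case `g(j) = j^n`.
-/

open Finset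

noncomputable section

/-- `fdiff l g i` is the `l`-th finite difference
`∇^l g(i) = ∑_{k=0}^{l} (-1)^{l-k} C(l,k) g(i+k)`. -/
def fdiff (l : ℕ) (g : ℕ → ℝ) (i : ℕ) : ℝ :=
  ∑ k ∈ Finset.range (l + 1), (-1 : ℝ) ^ (l - k) * (l.choose k : ℝ) * g (i + k)

theorem Nat.cast_choose_succ_mul_sub {R : Type*} [CommRing R] (m k : ℕ) (hk : k ≤ m + 1) :
    ((m + 1).choose k : R) * (m + 1 - k) = (m + 1) * m.choose k := by
  have h := congrArg (Nat.cast : ℕ → R) (Nat.choose_mul_succ_eq m k)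
  push_cast [Nat.cast_sub hk] at h
  linear_combination -h

theorem fdiff_natCast_mul (l : ℕ) (g : ℕ → ℝ) (i : ℕ) :
    fdiff l (fun j => (j : ℝ) * g j) i =
      ((l : ℝ) + i) * fdiff l g i + l * fdiff (l - 1) g i := by
  rcases l with _ | m
  · simp [fdiff]
  have hterm : ∀ k ∈ range (m + 1),
      (-1 : ℝ) ^ (m + 1 - k) * ((m + 1).choose k : ℝ) * (((i + k : ℕ) : ℝ) * g (i + k)) =
        ((m + 1 : ℕ) + i : ℝ) * ((-1) ^ (m + 1 - k) * ((m + 1).choose k : ℝ) * g (i + k)) +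
          (m + 1 : ℕ) * ((-1) ^ (m - k) * (m.choose k : ℝ) * g (i + k)) := by
    intro k hk_mem
    have hk : k ≤ m := Nat.lt_succ_iff.mp (mem_range.mp hk_mem)
    rw [Nat.sub_add_comm hk, pow_succ]
    push_cast
    linear_combination
      (-1 : ℝ) ^ (m - k) * g (i + k) * Nat.cast_choose_succ_mul_sub (R := ℝ) m k (by omega)
  simp only [fdiff, sum_range_succ _ (m + 1), Nat.sub_self, Nat.choose_self, add_tsub_cancel_right,
    sum_congr rfl hterm, sum_add_distrib, mul_add, mul_sum]
  push_cast
  ring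

theorem fdiff_pow_succ_general (i n : ℕ) (l : ℕ) :
    fdiff l (fun j => (j : ℝ) ^ (n + 1)) i =
      ((l : ℝ) + (i : ℝ)) * fdiff l (fun j => (j : ℝ) ^ n) i +
        (l : ℝ) * fdiff (l - 1) (fun j => (j : ℝ) ^ n) i := by
  simp only [pow_succ']
  exact fdiff_natCast_mul l _ i

/-- Exact recurrence for finite differences of power functions:
`∇^l i^{n+1} = (l + i) ∇^l i^n + l ∇^{l-1} i^n`. -/
theorem fdiff_pow_succ (i n : ℕ) (l : ℕ) (hl : 1 ≤ l) :
    fdiff l (fun j => (j : ℝ) ^ (n + 1)) i =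
      ((l : ℝ) + (i : ℝ)) * fdiff l (fun j => (j : ℝ) ^ n) i +
        (l : ℝ) * fdiff (l - 1) (fun j => (j : ℝ) ^ n) i :=
  fdiff_pow_succ_general i n l
end
end

section
/- Let N ≥ 3, let F : ℝ → ℝ, and let 0 = x_1 < x_2 < ⋯ < x_N = 1 be a fixed configuration under F, with Δ = x_2 − x_1. For 2 ≤ i ≤ N−1 set Q_i = Δ²·Σ_{k=2}^{i} F(x_k). Then for every i = 2, …, N−1 one has 1 + Q_i > 0 and x_{i+1} − x_i = Δ·(1 + Q_i)^{−1/2}; equivalently, writing x_{i+1} − x_i = Δ(1 + δ_i), one has δ_i = (1 + Q_i)^{−1/2} − 1. -/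
/-!
The force balance at `x_i` reads `1/(x_{i+1} - x_i)² = 1/(x_i - x_{i-1})² + F(x_i)`, so the
inverse squared gaps telescope to `1/(x_{i+1} - x_i)² = Δ⁻² + ∑_{k=2}^{i} F(x_k) = Δ⁻² (1 + Q_i)`.
Since the gap is positive, `1 + Q_i = (Δ / (x_{i+1} - x_i))² > 0`, and taking the
`-1/2` power recovers the gap.
-/

open Finset

noncomputable section

/-- A fixed configuration of `N` points `0 = x 1 < x 2 < ⋯ < x N = 1` on `[0,1]`
under the external force `F`, with nearest-neighbour Coulomb repulsion `f r = r⁻².` -/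
def IsFixedConfig (N : ℕ) (F : ℝ → ℝ) (x : ℕ → ℝ) : Prop :=
  x 1 = 0 ∧ x N = 1 ∧
  (∀ i, 1 ≤ i → i < N → x i < x (i + 1)) ∧
  (∀ i, 2 ≤ i → i ≤ N - 1 →
    1 / (x i - x (i - 1)) ^ 2 - 1 / (x (i + 1) - x i) ^ 2 + F (x i) = 0)

theorem eq_add_sum_Icc_of_succ_eq {M : Type*} [AddCommMonoid M] {u a : ℕ → M} {m n : ℕ}
    (hmn : m ≤ n) (h : ∀ k, m ≤ k → k < n → u (k + 1) = u k + a (k + 1)) :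
    u n = u m + ∑ k ∈ Icc (m + 1) n, a k := by
  induction n, hmn using Nat.le_induction with
  | base => simp
  | succ n hmn ih =>
    rw [h n hmn n.lt_succ_self, ih fun k hmk hkn => h k hmk (hkn.trans n.lt_succ_self),
      sum_Icc_succ_top (by omega), add_assoc]

theorem sq_rpow_neg_half {b : ℝ} (hb : 0 ≤ b) : (b ^ 2) ^ (-(1 / 2) : ℝ) = b⁻¹ := by
  rw [Real.rpow_neg (by positivity), ← Real.sqrt_eq_rpow, Real.sqrt_sq hb]

theorem eq_mul_rpow_neg_half_of_one_div_sq_eq {Δ g S : ℝ} (hΔ : 0 < Δ) (hg : 0 < g)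
    (h : 1 / g ^ 2 = 1 / Δ ^ 2 + S) :
    0 < 1 + Δ ^ 2 * S ∧ g = Δ * (1 + Δ ^ 2 * S) ^ (-(1 / 2) : ℝ) := by
  have hsq : 1 + Δ ^ 2 * S = (Δ / g) ^ 2 := by
    rw [show S = 1 / g ^ 2 - 1 / Δ ^ 2 by linarith]
    field_simp
    ring
  rw [hsq, sq_rpow_neg_half (div_pos hΔ hg).le]
  exact ⟨by positivity, by field_simp⟩

namespace IsFixedConfig

variable {N : ℕ} {F : ℝ → ℝ} {x : ℕ → ℝ}

theorem gap_pos (hx : IsFixedConfig N F x) {i : ℕ} (h1i : 1 ≤ i) (hiN : i < N) :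
    0 < x (i + 1) - x i :=
  sub_pos.2 (hx.2.2.1 i h1i hiN)

theorem one_div_gap_sq_eq (hx : IsFixedConfig N F x) {i : ℕ} (h1i : 1 ≤ i) (hiN : i ≤ N - 1) :
    1 / (x (i + 1) - x i) ^ 2 = 1 / (x 2 - x 1) ^ 2 + ∑ k ∈ Icc 2 i, F (x k) := by
  refine eq_add_sum_Icc_of_succ_eq (u := fun k => 1 / (x (k + 1) - x k) ^ 2) h1i
    fun k hk hkN => ?_
  have hbalance := hx.2.2.2 (k + 1) (by omega) (by omega)
  simp only [Nat.add_sub_cancel] at hbalance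
  linarith

end IsFixedConfig

theorem increments_of_fixed_config_general (N : ℕ) (F : ℝ → ℝ)
    (x : ℕ → ℝ) (hx : IsFixedConfig N F x) :
    ∀ i : ℕ, 2 ≤ i → i ≤ N - 1 →
      0 < 1 + (x 2 - x 1) ^ 2 * ∑ k ∈ Finset.Icc 2 i, F (x k) ∧
      x (i + 1) - x i =
        (x 2 - x 1) *
          (1 + (x 2 - x 1) ^ 2 * ∑ k ∈ Finset.Icc 2 i, F (x k)) ^ (-(1 / 2) : ℝ) := by
  intro i h2i hiN
  exact eq_mul_rpow_neg_half_of_one_div_sq_eq (hx.gap_pos le_rfl (by omega))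
    (hx.gap_pos (by omega) (by omega)) (hx.one_div_gap_sq_eq (by omega) hiN)

/-- For a fixed configuration under any external force `F`, with
`Q_i = Δ² ∑_{k=2}^{i} F(x_k)`, one has `1 + Q_i > 0` and
`x_{i+1} − x_i = Δ (1 + Q_i)^{-1/2}` for `i = 2, …, N−1`. -/
theorem increments_of_fixed_config (N : ℕ) (hN : 3 ≤ N) (F : ℝ → ℝ)
    (x : ℕ → ℝ) (hx : IsFixedConfig N F x) :
    ∀ i : ℕ, 2 ≤ i → i ≤ N - 1 →
      0 < 1 + (x 2 - x 1) ^ 2 * ∑ k ∈ Finset.Icc 2 i, F (x k) ∧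
      x (i + 1) - x i =
        (x 2 - x 1) *
          (1 + (x 2 - x 1) ^ 2 * ∑ k ∈ Finset.Icc 2 i, F (x k)) ^ (-(1 / 2) : ℝ) :=
  increments_of_fixed_config_general N F x hx
end
end

section
/- Let N, l, n be integers with l ≥ 3 and n ≥ 1, let Δ > 0 and C ≥ 1 be reals with (l−3)·Δ ≤ 1, and let x : {1, …, N} → ℝ satisfy: 0 ≤ x_i ≤ 1 for all i; |∇x_i| ≤ Δ whenever i + 1 ≤ N; and |∇^k x_i| ≤ Δ·(C·Δ)^k·k! for every k = 2, …, l−1 and every i with i + k ≤ N. Then for every i with i + l − 1 ≤ N, the (l−1)-st finite difference of the function i ↦ x_i^n satisfies |∇^{l−1}(x_i^n)| ≤ (C·Δ)^{l−1}·(l−1)!·n!·e^{2 + 1/C}. -/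
open Finset

noncomputable section

/-!
Write `∇ = Δ_[1]` and `m = l - 1`. By the Leibniz rule
`∇^j (f g)(i) = ∑_{a+b=j} C(j,a) ∇^a f(i) ∇^b g(i+a)`, bounds `|∇^k x| ≤ k! (CΔ)^k h_k` for
`k ≤ m` propagate to `|∇^j (x^n)| ≤ j! (CΔ)^j [X^j] H^n`, where
`H = ∑ h_k X^k = 1 + X/C + Δ (X² + ⋯ + X^m)`. As `H` has nonnegative coefficients,
`[X^m] H^n ≤ H(1)^n = (1 + y)^n ≤ n! e^y` with `y = 1/C + (m-1)Δ`, and `(m-1)Δ = (l-3)Δ + Δ ≤ 2`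
when `Δ ≤ 1`.
When `Δ > 1` we have `CΔ ≥ 1` and the crude bound `|∇^m (x^n)| ≤ 2^m ≤ m! e` suffices.
-/

open Polynomial Nat Real fwdDiff

theorem one_add_pow_le_factorial_mul_exp {y : ℝ} (hy : 0 ≤ y) (n : ℕ) :
    (1 + y) ^ n ≤ n ! * exp y := by
  calc (1 + y) ^ n = ∑ c ∈ range (n + 1), (n.choose c : ℝ) * y ^ c := by
        rw [add_comm, add_pow]; exact sum_congr rfl fun c _ => by ring
    _ ≤ ∑ c ∈ range (n + 1), n ! * (y ^ c / c !) := by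
        refine sum_le_sum fun c hc => ?_
        have hcn : c ≤ n := Nat.lt_succ_iff.mp (mem_range.mp hc)
        have : (n.choose c : ℝ) * c ! ≤ n ! := by
          exact_mod_cast (Nat.choose_mul_factorial_mul_factorial hcn ▸
            Nat.le_mul_of_pos_right _ (Nat.factorial_pos _))
        rw [mul_div_assoc', le_div_iff₀ (by positivity)]
        nlinarith [pow_nonneg hy c]
    _ ≤ n ! * exp y := by
        rw [← mul_sum]
        exact mul_le_mul_of_nonneg_left (sum_le_exp_of_nonneg hy _) (by positivity)

section FwdDiff

variable {M : Type*} [AddCommMonoid M] (h : M)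

theorem fdiff_eq_fwdDiff_iter (l : ℕ) (g : ℕ → ℝ) (i : ℕ) : fdiff l g i = Δ_[1] ^[l] g i := by
  simp [fdiff, fwdDiff_iter_eq_sum_shift]

theorem norm_fwdDiff_iter_le {E : Type*} [SeminormedAddCommGroup E] (g : M → E) {B : ℝ}
    (j : ℕ) (y : M) (hg : ∀ k ≤ j, ‖g (y + k • h)‖ ≤ B) :
    ‖Δ_[h] ^[j] g y‖ ≤ 2 ^ j * B := by
  induction j generalizing y with
  | zero => simpa using hg 0 le_rfl
  | succ j ih =>
    have hnext := ih (y + h) fun k hk => by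
      simpa [add_assoc, succ_nsmul'] using hg (k + 1) (by omega)
    have hhere := ih y fun k hk => hg k (by omega)
    rw [Function.iterate_succ_apply', fwdDiff, pow_succ]
    linarith [norm_sub_le (Δ_[h] ^[j] g (y + h)) (Δ_[h] ^[j] g y)]

theorem abs_fwdDiff_iter_le_factorial_mul_exp_one {g : ℕ → ℝ} {i j : ℕ}
    (hg : ∀ k ≤ j, |g (i + k)| ≤ 1) : |Δ_[1] ^[j] g i| ≤ j ! * exp 1 :=
  calc _ ≤ (2 : ℝ) ^ j := by
        have h2 := norm_fwdDiff_iter_le 1 g j i (by simpa using hg)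
        simpa using h2
    _ ≤ _ := by simpa [one_add_one_eq_two] using one_add_pow_le_factorial_mul_exp zero_le_one j

theorem fwdDiff_iter_mul {R : Type*} [CommRing R] (f g : M → R) (n : ℕ) (y : M) :
    Δ_[h] ^[n] (f * g) y = ∑ ij ∈ antidiagonal n,
      (n.choose ij.1 : R) * (Δ_[h] ^[ij.1] f y * Δ_[h] ^[ij.2] g (y + ij.1 • h)) := by
  induction n generalizing y with
  | zero => simp
  | succ n ih =>
    have hstep : ∀ (F : M → R) k z,
        Δ_[h] ^[k] F (z + h) = Δ_[h] ^[k] F z + Δ_[h] ^[k + 1] F z := by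
      intro F k z
      rw [Function.iterate_succ_apply', fwdDiff]
      ring
    rw [sum_antidiagonal_choose_succ_mul (fun a b => Δ_[h] ^[a] f y * Δ_[h] ^[b] g (y + a • h)),
      Function.iterate_succ_apply', fwdDiff, ih, ih, ← sum_sub_distrib, ← sum_add_distrib]
    refine sum_congr rfl fun ij hij => ?_
    rw [Nat.choose_symm_of_eq_add (mem_antidiagonal.mp hij).symm, succ_nsmul, ← add_assoc,
      add_right_comm, hstep f, hstep g]
    ring

theorem fwdDiff_iter_one {R : Type*} [Ring R] (j : ℕ) (y : M) :
    Δ_[h] ^[j] (1 : M → R) y = if j = 0 then 1 else 0 := by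
  cases j with
  | zero => simp
  | succ j => simp [Function.iterate_succ_apply, Pi.one_def, Function.iterate_fixed]

theorem abs_fwdDiff_iter_pow_le_coeff_pow {f : M → ℝ} {r : ℝ} {H : ℝ[X]} {y : M} {m : ℕ}
    (hf : ∀ a s, a + s ≤ m → |Δ_[h] ^[a] f (y + s • h)| ≤ a ! * r ^ a * H.coeff a) (n : ℕ) :
    ∀ j s, j + s ≤ m → |Δ_[h] ^[j] (f ^ n) (y + s • h)| ≤ j ! * r ^ j * (H ^ n).coeff j := by
  induction n with
  | zero =>
    intro j s _
    rw [pow_zero, pow_zero, fwdDiff_iter_one, coeff_one]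
    split_ifs <;> simp_all
  | succ n ih =>
    intro j s hjs
    rw [_root_.pow_succ', _root_.pow_succ', fwdDiff_iter_mul, coeff_mul, mul_sum]
    refine (abs_sum_le_sum_abs _ _).trans (sum_le_sum fun ab hab => ?_)
    obtain ⟨a, b⟩ := ab
    obtain rfl : a + b = j := mem_antidiagonal.mp hab
    have hfa := hf a s (by omega)
    have hgb := ih b (s + a) (by omega)
    rw [add_nsmul, ← add_assoc] at hgb
    calc _ = ((a + b).choose a : ℝ) * (|Δ_[h] ^[a] f (y + s • h)| *
          |Δ_[h] ^[b] (f ^ n) (y + s • h + a • h)|) := by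
          rw [abs_mul, abs_mul, Nat.abs_cast]
      _ ≤ ((a + b).choose a : ℝ) * ((a ! * r ^ a * H.coeff a) * (b ! * r ^ b * (H ^ n).coeff b)) :=
          mul_le_mul_of_nonneg_left
            (mul_le_mul hfa hgb (abs_nonneg _) ((abs_nonneg _).trans hfa)) (by positivity)
      _ = ((a + b).choose a * a ! * b ! : ℕ) * r ^ (a + b) * (H.coeff a * (H ^ n).coeff b) := by
          push_cast; ring
      _ = _ := by rw [Nat.choose_symm_add, Nat.add_choose_mul_factorial_mul_factorial]

end FwdDiff

section NonnegCoeff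

variable {R : Type*} [CommSemiring R] [PartialOrder R] [IsOrderedRing R]

theorem coeff_pow_nonneg {p : R[X]} (hp : ∀ k, 0 ≤ p.coeff k) (n k : ℕ) :
    0 ≤ (p ^ n).coeff k := by
  induction n generalizing k with
  | zero => rw [pow_zero, coeff_one]; split_ifs <;> simp
  | succ n ih =>
    rw [pow_succ, coeff_mul]
    exact sum_nonneg fun ab _ => mul_nonneg (ih _) (hp _)

theorem coeff_le_eval_one {p : R[X]} (hp : ∀ k, 0 ≤ p.coeff k) (k : ℕ) :
    p.coeff k ≤ p.eval 1 := by
  rw [eval_eq_sum_range' (Nat.lt_add_of_pos_right (Nat.succ_pos k))]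
  simp only [one_pow, mul_one]
  exact single_le_sum (fun i _ => hp i) (mem_range.mpr (by omega))

end NonnegCoeff

def fdiffMajorant (c Δ : ℝ) (m : ℕ) : ℝ[X] :=
  1 + c • X + Δ • ∑ k ∈ Ico 2 (m + 1), X ^ k

theorem coeff_fdiffMajorant (c Δ : ℝ) (m k : ℕ) :
    (fdiffMajorant c Δ m).coeff k =
      if k = 0 then 1 else if k = 1 then c else if k ≤ m then Δ else 0 := by
  rcases k with _ | _ | k <;> simp [fdiffMajorant, coeff_one, coeff_X, finsetSum_coeff, coeff_X_pow]

theorem coeff_fdiffMajorant_nonneg {c Δ : ℝ} (hc : 0 ≤ c) (hΔ : 0 ≤ Δ) (m k : ℕ) :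
    0 ≤ (fdiffMajorant c Δ m).coeff k := by
  rw [coeff_fdiffMajorant]
  split_ifs <;> first | exact zero_le_one | exact le_rfl | assumption

theorem eval_one_fdiffMajorant (c Δ : ℝ) (m : ℕ) :
    (fdiffMajorant c Δ m).eval 1 = 1 + c + (m - 1 : ℕ) * Δ := by
  simp [fdiffMajorant, eval_finsetSum, mul_comm]

theorem coeff_fdiffMajorant_pow_le {c Δ : ℝ} (hc : 0 ≤ c) (hΔ : 0 ≤ Δ) (m n k : ℕ) :
    ((fdiffMajorant c Δ m) ^ n).coeff k ≤ n ! * exp (c + (m - 1 : ℕ) * Δ) :=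
  calc _ ≤ ((fdiffMajorant c Δ m) ^ n).eval 1 :=
        coeff_le_eval_one (coeff_pow_nonneg (coeff_fdiffMajorant_nonneg hc hΔ m) n) k
    _ ≤ _ := by
        rw [eval_pow, eval_one_fdiffMajorant, add_assoc]
        exact one_add_pow_le_factorial_mul_exp (by positivity) n

theorem abs_fwdDiff_iter_le_coeff_fdiffMajorant {x : ℕ → ℝ} {C Δ : ℝ} {i m : ℕ} (hC : C ≠ 0)
    (h0 : ∀ s ≤ m, |x (i + s)| ≤ 1) (h1 : ∀ s, s + 1 ≤ m → |Δ_[1] x (i + s)| ≤ Δ)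
    (hk : ∀ a s, 2 ≤ a → a + s ≤ m → |Δ_[1] ^[a] x (i + s)| ≤ Δ * (C * Δ) ^ a * a !)
    (a s : ℕ) (has : a + s ≤ m) :
    |Δ_[1] ^[a] x (i + s • 1)| ≤ a ! * (C * Δ) ^ a * (fdiffMajorant C⁻¹ Δ m).coeff a := by
  rw [smul_eq_mul, mul_one, coeff_fdiffMajorant]
  rcases a with _ | _ | a
  · simpa using h0 s (by omega)
  · simpa [mul_comm C, mul_assoc, hC] using h1 s (by omega)
  · rw [if_neg (by omega), if_neg (by omega), if_pos (by omega)]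
    linear_combination hk (a + 2) s (by omega) has

theorem abs_fwdDiff_iter_pow_le {x : ℕ → ℝ} {C Δ : ℝ} {i m : ℕ} (hC : 0 < C) (hΔ : 0 ≤ Δ)
    (hmΔ : m * Δ ≤ 2) (h0 : ∀ s ≤ m + 1, |x (i + s)| ≤ 1)
    (h1 : ∀ s, s + 1 ≤ m + 1 → |Δ_[1] x (i + s)| ≤ Δ)
    (hk : ∀ a s, 2 ≤ a → a + s ≤ m + 1 → |Δ_[1] ^[a] x (i + s)| ≤ Δ * (C * Δ) ^ a * a !)
    (n : ℕ) :
    |Δ_[1] ^[m + 1] (fun j => x j ^ n) i| ≤ (C * Δ) ^ (m + 1) * (m + 1)! * n ! * exp (2 + C⁻¹) :=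
  calc _ ≤ (m + 1)! * (C * Δ) ^ (m + 1) * ((fdiffMajorant C⁻¹ Δ (m + 1)) ^ n).coeff (m + 1) := by
        simpa [Pi.pow_def] using abs_fwdDiff_iter_pow_le_coeff_pow 1
          (abs_fwdDiff_iter_le_coeff_fdiffMajorant hC.ne' h0 h1 hk) n (m + 1) 0 (by simp)
    _ ≤ (m + 1)! * (C * Δ) ^ (m + 1) * (n ! * exp (C⁻¹ + m * Δ)) := by
        gcongr
        simpa using coeff_fdiffMajorant_pow_le (inv_nonneg.mpr hC.le) hΔ (m + 1) n (m + 1)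
    _ = (C * Δ) ^ (m + 1) * (m + 1)! * n ! * exp (C⁻¹ + m * Δ) := by ring
    _ ≤ _ := mul_le_mul_of_nonneg_left (exp_le_exp.mpr (by linarith)) (by positivity)

theorem fdiff_power_inductive_bound_general (N l n : ℕ) (hl : 3 ≤ l)
    (Δ C : ℝ) (hΔ : 0 < Δ) (hC : 1 ≤ C) (hlΔ : ((l : ℝ) - 3) * Δ ≤ 1)
    (x : ℕ → ℝ)
    (hx01 : ∀ i, 1 ≤ i → i ≤ N → 0 ≤ x i ∧ x i ≤ 1)
    (hx1 : ∀ i, 1 ≤ i → i + 1 ≤ N → |fdiff 1 x i| ≤ Δ)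
    (hxk : ∀ k, 2 ≤ k → k ≤ l - 1 → ∀ i, 1 ≤ i → i + k ≤ N →
      |fdiff k x i| ≤ Δ * (C * Δ) ^ k * (Nat.factorial k : ℝ)) :
    ∀ i, 1 ≤ i → i + (l - 1) ≤ N →
      |fdiff (l - 1) (fun j => x j ^ n) i| ≤
        (C * Δ) ^ (l - 1) * (Nat.factorial (l - 1) : ℝ) * (Nat.factorial n : ℝ) *
          Real.exp (2 + 1 / C) := by
  intro i hi hiN
  obtain ⟨m, rfl⟩ : ∃ m, l = m + 2 := ⟨l - 2, by omega⟩
  simp only [show m + 2 - 1 = m + 1 by omega, fdiff_eq_fwdDiff_iter] at hiN hx1 hxk ⊢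
  have hx : ∀ s ≤ m + 1, |x (i + s)| ≤ 1 := fun s hs =>
    have hxs := hx01 (i + s) (by omega) (by omega)
    abs_le.mpr ⟨by linarith [hxs.1], hxs.2⟩
  rcases le_or_gt Δ 1 with hΔ1 | hΔ1
  · rw [one_div]
    refine abs_fwdDiff_iter_pow_le (by positivity) hΔ.le ?_ hx
      (fun s hs => by simpa using hx1 (i + s) (by omega) (by omega))
      (fun a s ha has => hxk a ha (by omega) (i + s) (by omega) (by omega)) n
    push_cast at hlΔ
    linarith
  · have hCΔ : 1 ≤ C * Δ := by nlinarith
    calc _ ≤ (m + 1)! * exp 1 := abs_fwdDiff_iter_le_factorial_mul_exp_one fun k hk => by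
          simpa [abs_pow] using pow_le_one₀ (n := n) (abs_nonneg _) (hx k hk)
      _ = 1 * (m + 1)! * 1 * exp 1 := by ring
      _ ≤ _ := by
          gcongr
          · exact one_le_pow₀ hCΔ
          · exact_mod_cast n.factorial_pos
          · linarith [one_div_pos.mpr (zero_lt_one.trans_le hC)]

/-- Inductive bound for finite differences of the power `x_i^n`: if `0 ≤ x_i ≤ 1`,
`|∇ x_i| ≤ Δ` and `|∇^k x_i| ≤ Δ (C Δ)^k k!` for `2 ≤ k ≤ l-1`, then
`|∇^{l-1}(x_i^n)| ≤ (C Δ)^{l-1} (l-1)! n! e^{2 + 1/C}`. -/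
theorem fdiff_power_inductive_bound (N l n : ℕ) (hl : 3 ≤ l) (hn : 1 ≤ n)
    (Δ C : ℝ) (hΔ : 0 < Δ) (hC : 1 ≤ C) (hlΔ : ((l : ℝ) - 3) * Δ ≤ 1)
    (x : ℕ → ℝ)
    (hx01 : ∀ i, 1 ≤ i → i ≤ N → 0 ≤ x i ∧ x i ≤ 1)
    (hx1 : ∀ i, 1 ≤ i → i + 1 ≤ N → |fdiff 1 x i| ≤ Δ)
    (hxk : ∀ k, 2 ≤ k → k ≤ l - 1 → ∀ i, 1 ≤ i → i + k ≤ N →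
      |fdiff k x i| ≤ Δ * (C * Δ) ^ k * (Nat.factorial k : ℝ)) :
    ∀ i, 1 ≤ i → i + (l - 1) ≤ N →
      |fdiff (l - 1) (fun j => x j ^ n) i| ≤
        (C * Δ) ^ (l - 1) * (Nat.factorial (l - 1) : ℝ) * (Nat.factorial n : ℝ) *
          Real.exp (2 + 1 / C) :=
  fdiff_power_inductive_bound_general N l n hl Δ C hΔ hC hlΔ x hx01 hx1 hxk
end
end

section
/- Let L > 0 and let F : [0, L] → ℝ be continuous and nondecreasing. For each N ≥ 3 let x^{(N)} be the (unique) fixed configuration of N points on [0, L] under F, with x_1 = 0 and x_N = L. Then the increments satisfy x_{i+1} − x_i ~ L/(N−1) uniformly in i; precisely: for every ε > 0 there exists N₀ such that for all N ≥ N₀ and all 1 ≤ i ≤ N−1, |(x_{i+1} − x_i)·(N−1)/L − 1| ≤ ε. In particular this asymptotics does not depend on F. -/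
/-!
The equilibrium equations say that the inverse-square gaps `gₖ = (x_{k+1} - x_k)⁻²` change by
`F(x_k)` from one gap to the next, so with `|F| ≤ M` on `[0, L]` any two of them differ by at
most `N M`. The gaps sum to `L`, so some gap is at most and some at least `L/(N-1)`: hence every
`gₖ` lies within `N M` of `((N-1)/L)²`. This target grows quadratically in `N` while the error grows only
linearly, so `gₖ ((N-1)/L)⁻² → 1`, i.e. `(x_{k+1} - x_k)(N-1)/L → 1`, uniformly in `k`.
-/

open Finset

noncomputable section

/-- A fixed configuration of `N` points `0 = x 1 < x 2 < ⋯ < x N = L` on `[0, L]`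
under the external force `F`, with nearest-neighbour Coulomb repulsion `f r = r⁻²`. -/
def IsFixedConfigOn (L : ℝ) (N : ℕ) (F : ℝ → ℝ) (x : ℕ → ℝ) : Prop :=
  x 1 = 0 ∧ x N = L ∧
  (∀ i, 1 ≤ i → i < N → x i < x (i + 1)) ∧
  (∀ i, 2 ≤ i → i ≤ N - 1 →
    1 / (x i - x (i - 1)) ^ 2 - 1 / (x (i + 1) - x i) ^ 2 + F (x i) = 0)

/-- The bracket `(1 - e)² (1 + e/2) ≤ 1 ≤ (1 + e)² (1 - e/2)` needs `e ≤ 1`. -/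
theorem abs_sub_one_le_of_abs_inv_sq_sub_one_le {t e : ℝ} (ht : 0 < t) (he : 0 < e) (he1 : e ≤ 1)
    (h : |1 / t ^ 2 - 1| ≤ e / 2) : |t - 1| ≤ e := by
  obtain ⟨hlo, hhi⟩ := abs_le.1 h
  have ht2 : 0 < t ^ 2 := by positivity
  rw [le_sub_iff_add_le, le_div_iff₀ ht2] at hlo
  rw [sub_le_iff_le_add, div_le_iff₀ ht2] at hhi
  rw [abs_le]
  constructor
  · nlinarith
  · nlinarith

namespace IsFixedConfigOn

variable {L : ℝ} {N : ℕ} {F : ℝ → ℝ} {x : ℕ → ℝ}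

theorem gap_pos (hx : IsFixedConfigOn L N F x) {k : ℕ} (hk : 1 ≤ k) (hkN : k < N) :
    0 < x (k + 1) - x k :=
  sub_pos.2 (hx.2.2.1 k hk hkN)

theorem le_of_le (hx : IsFixedConfigOn L N F x) {a b : ℕ} (ha : 1 ≤ a) (hab : a ≤ b)
    (hb : b ≤ N) : x a ≤ x b := by
  induction b, hab using Nat.le_induction with
  | base => rfl
  | succ b hab ih => exact (ih (by omega)).trans (hx.2.2.1 b (ha.trans hab) hb).le

theorem mem_Icc (hx : IsFixedConfigOn L N F x) {k : ℕ} (hk : 1 ≤ k) (hkN : k ≤ N) :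
    x k ∈ Set.Icc 0 L :=
  ⟨hx.1 ▸ hx.le_of_le le_rfl hk hkN, hx.2.1 ▸ hx.le_of_le hk hkN le_rfl⟩

theorem inv_sq_gap_succ (hx : IsFixedConfigOn L N F x) {k : ℕ} (hk : 1 ≤ k) (hkN : k + 2 ≤ N) :
    1 / (x (k + 2) - x (k + 1)) ^ 2 = 1 / (x (k + 1) - x k) ^ 2 + F (x (k + 1)) := by
  have h := hx.2.2.2 (k + 1) (by omega) (by omega)
  simp only [Nat.add_sub_cancel] at h
  linarith

theorem abs_inv_sq_gap_sub_le_of_le (hx : IsFixedConfigOn L N F x) {M : ℝ}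
    (hM : ∀ y ∈ Set.Icc 0 L, |F y| ≤ M) {a b : ℕ} (ha : 1 ≤ a) (hab : a ≤ b) (hbN : b < N) :
    |1 / (x (b + 1) - x b) ^ 2 - 1 / (x (a + 1) - x a) ^ 2| ≤ ((b : ℝ) - a) * M := by
  induction b, hab using Nat.le_induction with
  | base => simp
  | succ b hab ih =>
    rw [hx.inv_sq_gap_succ (ha.trans hab) hbN, add_sub_right_comm]
    calc _ ≤ |1 / (x (b + 1) - x b) ^ 2 - 1 / (x (a + 1) - x a) ^ 2| + |F (x (b + 1))| :=
          abs_add_le _ _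
      _ ≤ ((b : ℝ) - a) * M + M :=
          add_le_add (ih (by omega)) (hM _ (hx.mem_Icc (by omega) (by omega)))
      _ = ((b + 1 : ℕ) - (a : ℝ)) * M := by push_cast; ring

theorem abs_inv_sq_gap_sub_le (hx : IsFixedConfigOn L N F x) {M : ℝ}
    (hM : ∀ y ∈ Set.Icc 0 L, |F y| ≤ M) {a b : ℕ} (ha : 1 ≤ a) (haN : a < N) (hb : 1 ≤ b)
    (hbN : b < N) :
    |1 / (x (b + 1) - x b) ^ 2 - 1 / (x (a + 1) - x a) ^ 2| ≤ N * M := by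
  have hM0 : 0 ≤ M := (abs_nonneg _).trans (hM _ (hx.mem_Icc le_rfl (by omega)))
  have hN : ∀ c : ℕ, c < N → (c : ℝ) ≤ N := fun c hc => by exact_mod_cast hc.le
  rcases le_total a b with hab | hba
  · refine (hx.abs_inv_sq_gap_sub_le_of_le hM ha hab hbN).trans ?_
    nlinarith [hN b hbN, (Nat.cast_nonneg a : (0 : ℝ) ≤ a)]
  · rw [abs_sub_comm]
    refine (hx.abs_inv_sq_gap_sub_le_of_le hM hb hba haN).trans ?_
    nlinarith [hN a haN, (Nat.cast_nonneg b : (0 : ℝ) ≤ b)]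

theorem sum_gaps (hx : IsFixedConfigOn L N F x) (hN : 1 ≤ N) :
    ∑ k ∈ Ico 1 N, (x (k + 1) - x k) = L := by
  rw [sum_Ico_sub x hN, hx.1, hx.2.1, sub_zero]

theorem exists_gap_le_and_exists_le_gap (hx : IsFixedConfigOn L N F x) (hN : 2 ≤ N) :
    (∃ k ∈ Ico 1 N, x (k + 1) - x k ≤ L / ((N : ℝ) - 1)) ∧
      ∃ k ∈ Ico 1 N, L / ((N : ℝ) - 1) ≤ x (k + 1) - x k := by
  have hne : (Ico 1 N).Nonempty := nonempty_Ico.2 (by omega)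
  have hsum : ∑ _k ∈ Ico 1 N, L / ((N : ℝ) - 1) = L := by
    have : (N : ℝ) - 1 ≠ 0 := sub_ne_zero.2 (by norm_cast; omega)
    rw [sum_const, Nat.card_Ico, nsmul_eq_mul, Nat.cast_sub (by omega), Nat.cast_one]
    field_simp
  exact ⟨exists_le_of_sum_le hne ((hx.sum_gaps (by omega)).trans hsum.symm).le,
    exists_le_of_sum_le hne (hsum.trans (hx.sum_gaps (by omega)).symm).le⟩

theorem abs_inv_sq_gap_sub_sq_le (hx : IsFixedConfigOn L N F x) (hL : 0 < L) (hN : 2 ≤ N)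
    {M : ℝ} (hM : ∀ y ∈ Set.Icc 0 L, |F y| ≤ M) {i : ℕ} (hi : 1 ≤ i) (hiN : i < N) :
    |1 / (x (i + 1) - x i) ^ 2 - (((N : ℝ) - 1) / L) ^ 2| ≤ N * M := by
  obtain ⟨⟨k, hk, hk_le⟩, ⟨m, hm, hm_ge⟩⟩ := hx.exists_gap_le_and_exists_le_gap hN
  rw [mem_Ico] at hk hm
  have hLn : 0 < L / ((N : ℝ) - 1) := div_pos hL (by norm_num; exact_mod_cast hN)
  have hsq : (((N : ℝ) - 1) / L) ^ 2 = 1 / (L / ((N : ℝ) - 1)) ^ 2 := by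
    rw [one_div, ← inv_pow, inv_div]
  have hgk : (((N : ℝ) - 1) / L) ^ 2 ≤ 1 / (x (k + 1) - x k) ^ 2 := by
    have hdk := hx.gap_pos hk.1 hk.2
    rw [hsq]
    exact one_div_le_one_div_of_le (by positivity) (pow_le_pow_left₀ hdk.le hk_le 2)
  have hgm : 1 / (x (m + 1) - x m) ^ 2 ≤ (((N : ℝ) - 1) / L) ^ 2 := by
    rw [hsq]
    gcongr
  have hik := abs_le.1 (hx.abs_inv_sq_gap_sub_le hM hk.1 hk.2 hi hiN)
  have him := abs_le.1 (hx.abs_inv_sq_gap_sub_le hM hm.1 hm.2 hi hiN)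
  rw [abs_le]
  constructor <;> linarith [hik.1, him.2]

theorem abs_gap_mul_sub_one_le (hx : IsFixedConfigOn L N F x) (hL : 0 < L) (hN : 2 ≤ N)
    {M : ℝ} (hM : ∀ y ∈ Set.Icc 0 L, |F y| ≤ M) {e : ℝ} (he : 0 < e) (he1 : e ≤ 1)
    (hNM : N * M ≤ e / 2 * (((N : ℝ) - 1) / L) ^ 2) {i : ℕ} (hi : 1 ≤ i) (hiN : i < N) :
    |(x (i + 1) - x i) * (((N : ℝ) - 1) / L) - 1| ≤ e := by
  set u := ((N : ℝ) - 1) / L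
  have hu : 0 < u := div_pos (sub_pos.2 (by exact_mod_cast hN)) hL
  have hd := hx.gap_pos hi hiN
  refine abs_sub_one_le_of_abs_inv_sq_sub_one_le (mul_pos hd hu) he he1 ?_
  have hrel : 1 / ((x (i + 1) - x i) * u) ^ 2 - 1
      = (1 / (x (i + 1) - x i) ^ 2 - u ^ 2) / u ^ 2 := by
    field_simp
  rw [hrel, abs_div, abs_of_pos (pow_pos hu 2), div_le_iff₀ (pow_pos hu 2)]
  exact (hx.abs_inv_sq_gap_sub_sq_le hL hN hM hi hiN).trans hNM

end IsFixedConfigOn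

theorem increments_asymptotics_general (L : ℝ) (hL : 0 < L) (F : ℝ → ℝ)
    (hFcont : ContinuousOn F (Set.Icc 0 L)) :
    ∀ ε : ℝ, 0 < ε → ∃ N₀ : ℕ, ∀ N : ℕ, N₀ ≤ N → 3 ≤ N →
      ∀ x : ℕ → ℝ, IsFixedConfigOn L N F x →
        ∀ i, 1 ≤ i → i ≤ N - 1 →
          |(x (i + 1) - x i) * ((N : ℝ) - 1) / L - 1| ≤ ε := by
  obtain ⟨M, hM⟩ := isCompact_Icc.exists_bound_of_continuousOn hFcont
  simp only [Real.norm_eq_abs] at hM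
  have hM0 : 0 ≤ M := (abs_nonneg _).trans (hM 0 ⟨le_rfl, hL.le⟩)
  intro ε hε
  set e := min ε 1
  have he : 0 < e := lt_min hε one_pos
  refine ⟨⌈4 * M * L ^ 2 / e⌉₊ + 1, fun N hN hN3 x hx i hi hiN => ?_⟩
  have hN1 : ((N - 1 : ℕ) : ℝ) = (N : ℝ) - 1 := by rw [Nat.cast_sub (by omega), Nat.cast_one]
  set n : ℝ := (N : ℝ) - 1
  have hn : 2 ≤ n := by rw [← hN1]; exact_mod_cast (by omega : 2 ≤ N - 1)
  have hnM : 4 * M * L ^ 2 ≤ e * n := by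
    rw [← div_le_iff₀' he, ← hN1]
    exact (Nat.le_ceil _).trans (by exact_mod_cast (by omega : ⌈4 * M * L ^ 2 / e⌉₊ ≤ N - 1))
  -- `N M ≤ 2 n M`, and `4 M L² ≤ e n` makes this at most `e n² / (2 L²)`.
  have hNM : N * M ≤ e / 2 * (n / L) ^ 2 := by
    rw [div_pow, ← mul_div_assoc, le_div_iff₀ (by positivity), show (N : ℝ) = n + 1 by ring]
    nlinarith [mul_le_mul_of_nonneg_left hnM (by positivity : (0 : ℝ) ≤ n),
      mul_nonneg (by linarith : (0 : ℝ) ≤ n - 1) (by positivity : 0 ≤ M * L ^ 2)]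
  rw [mul_div_assoc]
  exact (hx.abs_gap_mul_sub_one_le hL (by omega) hM he (min_le_right _ _) hNM hi (by omega)).trans
    (min_le_left _ _)

/-- First differences of fixed configurations satisfy `x_{i+1} - x_i ~ L/(N-1)`
uniformly in `i`, independently of the (continuous, nondecreasing) force `F`. -/
theorem increments_asymptotics (L : ℝ) (hL : 0 < L) (F : ℝ → ℝ)
    (hFcont : ContinuousOn F (Set.Icc 0 L)) (hFmono : MonotoneOn F (Set.Icc 0 L)) :
    ∀ ε : ℝ, 0 < ε → ∃ N₀ : ℕ, ∀ N : ℕ, N₀ ≤ N → 3 ≤ N →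
      ∀ x : ℕ → ℝ, IsFixedConfigOn L N F x →
        ∀ i, 1 ≤ i → i ≤ N - 1 →
          |(x (i + 1) - x i) * ((N : ℝ) - 1) / L - 1| ≤ ε :=
  increments_asymptotics_general L hL F hFcont
end
end

section
/- Let F > 0 be a constant and for each N ≥ 3 let x^{(N)} be the fixed configuration of N points on [0, 1] under the constant external force F(x) ≡ F. Then the second-order term of the increments satisfies (x_{i+1} − x_i) − 1/(N−1) ~ (F/2)·N^{−3}·(N/2 − i); precisely: for every ε > 0 there exists N₀ such that for all N ≥ N₀ and all i = 2, …, N−1, |(x_{i+1} − x_i) − 1/(N−1) − (F/2)·N^{−3}·(N/2 − i)| ≤ ε·N^{−2}. -/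
/-!
The balance equations say that the inverse squared gaps `d_k⁻²` grow by `F` at each step,
so `d_k = (a + k F)^(-1/2)` with `a = d_0⁻²`. As the `m = N - 1` gaps sum to `1`, some gap is
at most `1/m` and some at least `1/m`; since `a + k F` is affine in `k`, this pins every
`a + k F` within `(m - 1)|F|` of `m²`. A second-order Taylor expansion of `t^(-1/2)` at `m²`
is then uniform in `k`, and summing it over `k` shows `a - m² + F (m - 1)/2 = O(F²)`.
Substituting back gives the expansion of each gap with error `O(m⁻³)`; replacing `m⁻³` by
`N⁻³` in the second-order term costs another `O(m⁻³)`.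
-/

open Finset

noncomputable section

theorem abs_inv_sqrt_one_add_sub_le {u : ℝ} (hu : |u| ≤ 1 / 2) :
    |(√(1 + u))⁻¹ - (1 - u / 2)| ≤ 2 * u ^ 2 := by
  obtain ⟨hu₁, hu₂⟩ := abs_le.1 hu
  have h₀ : 0 < 1 + u := by linarith
  set w := √(1 + u)
  have hw : 0 < w := Real.sqrt_pos.2 h₀
  have hw_sq : w ^ 2 = 1 + u := Real.sq_sqrt h₀.le
  have hw_le : w ≤ 1 + u / 2 := by nlinarith [sq_nonneg u]
  have hw_ge : 1 + u / 2 - u ^ 2 / 2 ≤ w := by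
    nlinarith [sq_nonneg (w - (1 + u / 2 - u ^ 2 / 2))]
  have hnum : |1 - (1 - u / 2) * w| ≤ 7 / 8 * u ^ 2 := by
    rw [abs_le]; constructor <;> nlinarith
  have hsplit : w⁻¹ - (1 - u / 2) = (1 - (1 - u / 2) * w) / w := by field_simp
  rw [hsplit, abs_div, abs_of_pos hw, div_le_iff₀ hw]
  nlinarith [sq_nonneg u]

theorem abs_inv_sqrt_sub_le {t M : ℝ} (hM : 0 < M) (ht : |t - M ^ 2| ≤ M ^ 2 / 2) :
    |(√t)⁻¹ - (1 / M - (t - M ^ 2) / (2 * M ^ 3))| ≤ 2 * (t - M ^ 2) ^ 2 / M ^ 5 := by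
  set u := (t - M ^ 2) / M ^ 2 with hu_def
  have hu : |u| ≤ 1 / 2 := by
    rw [hu_def, abs_div, abs_of_pos (by positivity : (0 : ℝ) < M ^ 2),
      div_le_iff₀ (by positivity)]
    linarith
  have ht_eq : t = M ^ 2 * (1 + u) := by rw [hu_def]; field_simp; ring
  have hsplit : (√t)⁻¹ - (1 / M - (t - M ^ 2) / (2 * M ^ 3))
      = M⁻¹ * ((√(1 + u))⁻¹ - (1 - u / 2)) := by
    rw [ht_eq, Real.sqrt_mul (by positivity), Real.sqrt_sq hM.le, hu_def]
    field_simp; ring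
  rw [hsplit, abs_mul, abs_of_pos (inv_pos.2 hM)]
  calc M⁻¹ * |(√(1 + u))⁻¹ - (1 - u / 2)| ≤ M⁻¹ * (2 * u ^ 2) := by
        gcongr; exact abs_inv_sqrt_one_add_sub_le hu
    _ = 2 * (t - M ^ 2) ^ 2 / M ^ 5 := by rw [hu_def]; field_simp

theorem sum_range_natCast_real (m : ℕ) : ∑ k ∈ range m, (k : ℝ) = m * (m - 1) / 2 := by
  induction m with
  | zero => simp
  | succ m ih => rw [sum_range_succ, ih]; push_cast; ring

theorem abs_natCast_sub_mul_le {k l m : ℕ} (hk : k < m) (hl : l < m) (F : ℝ) :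
    |((k : ℝ) - l) * F| ≤ (m - 1) * |F| := by
  have hk' : (k : ℝ) + 1 ≤ m := by exact_mod_cast hk
  have hl' : (l : ℝ) + 1 ≤ m := by exact_mod_cast hl
  rw [abs_mul]
  gcongr
  rw [abs_sub_le_iff]
  constructor <;> linarith [(k.cast_nonneg : (0 : ℝ) ≤ k), (l.cast_nonneg : (0 : ℝ) ≤ l)]

section ArithmeticInverseSquares

variable {m : ℕ} {a F : ℝ}

theorem abs_add_mul_sub_sq_le (hpos : ∀ k < m, 0 < a + k * F)
    (hsum : ∑ k ∈ range m, (√(a + k * F))⁻¹ = 1) {k : ℕ} (hk : k < m) :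
    |a + k * F - m ^ 2| ≤ (m - 1) * |F| := by
  have hm : (0 : ℝ) < m := by exact_mod_cast hk.trans_le' (Nat.zero_le k)
  have hne : (range m).Nonempty := nonempty_range_iff.2 (by omega)
  have hconst : ∑ _k ∈ range m, (m : ℝ)⁻¹ = 1 := by
    rw [sum_const, card_range, nsmul_eq_mul, mul_inv_cancel₀ hm.ne']
  obtain ⟨j, hj, hj_le⟩ := exists_le_of_sum_le hne (hsum.trans hconst.symm).le
  obtain ⟨l, hl, hl_ge⟩ := exists_le_of_sum_le hne (hconst.trans hsum.symm).le
  have hj_mem := mem_range.1 hj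
  have hl_mem := mem_range.1 hl
  have hsq_le : (m : ℝ) ^ 2 ≤ a + j * F := by
    rw [inv_le_inv₀ (Real.sqrt_pos.2 (hpos j hj_mem)) hm] at hj_le
    exact (Real.le_sqrt hm.le (hpos j hj_mem).le).1 hj_le
  have hle_sq : a + l * F ≤ (m : ℝ) ^ 2 := by
    rw [inv_le_inv₀ hm (Real.sqrt_pos.2 (hpos l hl_mem))] at hl_ge
    exact (Real.sqrt_le_left hm.le).1 hl_ge
  have hkj := abs_le.1 (abs_natCast_sub_mul_le hk hj_mem F)
  have hkl := abs_le.1 (abs_natCast_sub_mul_le hk hl_mem F)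
  rw [abs_le]
  constructor <;> linarith

theorem natCast_pos_of_sum_inv_sqrt_eq_one (hsum : ∑ k ∈ range m, (√(a + k * F))⁻¹ = 1) :
    (0 : ℝ) < m := by
  rcases Nat.eq_zero_or_pos m with rfl | hm
  · simp at hsum
  · exact_mod_cast hm

variable (hF : 2 * |F| ≤ m) (hpos : ∀ k < m, 0 < a + k * F)
  (hsum : ∑ k ∈ range m, (√(a + k * F))⁻¹ = 1)
include hF hpos hsum

theorem abs_inv_sqrt_add_mul_sub_le {k : ℕ} (hk : k < m) :
    |(√(a + k * F))⁻¹ - (1 / m - (a + k * F - m ^ 2) / (2 * m ^ 3))| ≤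
      2 * F ^ 2 / m ^ 3 := by
  have hm := natCast_pos_of_sum_inv_sqrt_eq_one hsum
  have hdev : |a + k * F - m ^ 2| ≤ m * |F| := by
    nlinarith [abs_add_mul_sub_sq_le hpos hsum hk, abs_nonneg F]
  have hdev_sq : (a + k * F - m ^ 2) ^ 2 ≤ (m * |F|) ^ 2 := by
    rw [← sq_abs]; gcongr
  calc _ ≤ 2 * (a + k * F - m ^ 2) ^ 2 / m ^ 5 :=
        abs_inv_sqrt_sub_le hm (by nlinarith [abs_nonneg F])
    _ ≤ 2 * (m * |F|) ^ 2 / m ^ 5 := by gcongr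
    _ = 2 * F ^ 2 / m ^ 3 := by rw [mul_pow, sq_abs]; field_simp

theorem abs_sub_sq_add_le : |a - m ^ 2 + F * (m - 1) / 2| ≤ 4 * F ^ 2 := by
  have hm := natCast_pos_of_sum_inv_sqrt_eq_one hsum
  set T : ℕ → ℝ := fun k ↦ 1 / m - (a + k * F - m ^ 2) / (2 * m ^ 3)
  have hT : ∑ k ∈ range m, T k = 1 - (a - m ^ 2 + F * (m - 1) / 2) / (2 * m ^ 2) := by
    have hT_affine : ∀ k, T k = (1 / m - (a - m ^ 2) / (2 * m ^ 3)) - F / (2 * m ^ 3) * k :=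
      fun k ↦ by simp only [T]; ring
    simp only [hT_affine, sum_sub_distrib, sum_const, card_range, nsmul_eq_mul, ← mul_sum,
      sum_range_natCast_real]
    field_simp; ring
  have hsum_err :
      |∑ k ∈ range m, ((√(a + k * F))⁻¹ - T k)| ≤ m * (2 * F ^ 2 / m ^ 3) := by
    refine (abs_sum_le_sum_abs _ _).trans ?_
    refine (sum_le_card_nsmul (range m) _ _ fun k hk ↦
      abs_inv_sqrt_add_mul_sub_le hF hpos hsum (mem_range.1 hk)).trans_eq ?_
    rw [card_range, nsmul_eq_mul]
  rw [sum_sub_distrib, hsum, hT, sub_sub_cancel, abs_div,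
    abs_of_pos (by positivity : (0 : ℝ) < 2 * m ^ 2),
    div_le_iff₀ (by positivity)] at hsum_err
  calc _ ≤ m * (2 * F ^ 2 / m ^ 3) * (2 * m ^ 2) := hsum_err
    _ = 4 * F ^ 2 := by field_simp; ring

theorem abs_inv_sqrt_add_mul_sub_second_order_le {k : ℕ} (hk : k < m) :
    |(√(a + k * F))⁻¹ - 1 / m - F / (2 * m ^ 3) * ((m - 1) / 2 - k)| ≤
      4 * F ^ 2 / m ^ 3 := by
  have hm := natCast_pos_of_sum_inv_sqrt_eq_one hsum
  have hsplit : (√(a + k * F))⁻¹ - 1 / m - F / (2 * m ^ 3) * ((m - 1) / 2 - k)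
      = ((√(a + k * F))⁻¹ - (1 / m - (a + k * F - m ^ 2) / (2 * m ^ 3)))
        - (a - m ^ 2 + F * (m - 1) / 2) / (2 * m ^ 3) := by
    field_simp; ring
  have hσ : |(a - m ^ 2 + F * (m - 1) / 2) / (2 * m ^ 3)| ≤ 2 * F ^ 2 / m ^ 3 := by
    rw [abs_div, abs_of_pos (by positivity : (0 : ℝ) < 2 * m ^ 3),
      div_le_div_iff₀ (by positivity) (by positivity)]
    nlinarith [abs_sub_sq_add_le hF hpos hsum, pow_pos hm 3]
  rw [hsplit]
  calc _ ≤ 2 * F ^ 2 / m ^ 3 + 2 * F ^ 2 / m ^ 3 :=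
        (abs_sub _ _).trans (add_le_add (abs_inv_sqrt_add_mul_sub_le hF hpos hsum hk) hσ)
    _ = 4 * F ^ 2 / m ^ 3 := by ring

end ArithmeticInverseSquares

theorem abs_mul_inv_pow_three_sub_le {M c : ℝ} (hM : 0 < M) (hc : |c| ≤ M / 2) (F : ℝ) :
    |F / (2 * M ^ 3) * c - F / 2 * ((M + 1) ^ 3)⁻¹ * c| ≤ |F| / M ^ 3 := by
  have hgap : 0 < (M + 1) ^ 3 - M ^ 3 := by nlinarith
  have hsplit : F / (2 * M ^ 3) * c - F / 2 * ((M + 1) ^ 3)⁻¹ * c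
      = F * c * ((M + 1) ^ 3 - M ^ 3) / (2 * M ^ 3 * (M + 1) ^ 3) := by
    field_simp
  have hkey : |c| * ((M + 1) ^ 3 - M ^ 3) ≤ 2 * (M + 1) ^ 3 := by
    nlinarith [mul_le_mul_of_nonneg_right hc hgap.le]
  rw [hsplit, abs_div, abs_mul, abs_mul, abs_of_pos hgap,
    abs_of_pos (by positivity : (0 : ℝ) < 2 * M ^ 3 * (M + 1) ^ 3),
    div_le_div_iff₀ (by positivity) (by positivity)]
  nlinarith [mul_le_mul_of_nonneg_left hkey (by positivity : 0 ≤ |F| * M ^ 3)]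

namespace IsFixedConfig

variable {N : ℕ} {F : ℝ} {x : ℕ → ℝ}

theorem increment_pos (hx : IsFixedConfig N (fun _ ↦ F) x) {k : ℕ} (hk : k + 1 < N) :
    0 < x (k + 2) - x (k + 1) :=
  sub_pos.2 (hx.2.2.1 (k + 1) (by omega) hk)

theorem inv_sq_increment (hx : IsFixedConfig N (fun _ ↦ F) x) {k : ℕ} (hk : k + 1 < N) :
    ((x (k + 2) - x (k + 1)) ^ 2)⁻¹ = ((x 2 - x 1) ^ 2)⁻¹ + k * F := by
  induction k with
  | zero => simp
  | succ k ih =>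
    have hbalance := hx.2.2.2 (k + 2) (by omega) (by omega)
    simp only [one_div, show k + 2 - 1 = k + 1 by omega] at hbalance
    have hstep :
        ((x (k + 2 + 1) - x (k + 2)) ^ 2)⁻¹ = ((x (k + 2) - x (k + 1)) ^ 2)⁻¹ + F := by
      linarith
    rw [show k + 1 + 2 = k + 2 + 1 by omega, show k + 1 + 1 = k + 2 by omega, hstep,
      ih (by omega)]
    push_cast; ring

theorem increment_eq (hx : IsFixedConfig N (fun _ ↦ F) x) {k : ℕ} (hk : k + 1 < N) :
    x (k + 2) - x (k + 1) = (√(((x 2 - x 1) ^ 2)⁻¹ + k * F))⁻¹ := by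
  rw [← hx.inv_sq_increment hk, Real.sqrt_inv, Real.sqrt_sq (hx.increment_pos hk).le, inv_inv]

theorem sum_increment (hx : IsFixedConfig N (fun _ ↦ F) x) (hN : 1 ≤ N) :
    ∑ k ∈ range (N - 1), (x (k + 2) - x (k + 1)) = 1 := by
  rw [sum_range_sub (fun k ↦ x (k + 1)), Nat.sub_add_cancel hN, hx.1, hx.2.1, sub_zero]

theorem abs_increment_sub_le (hx : IsFixedConfig N (fun _ ↦ F) x) (hF : 2 * |F| ≤ (N : ℝ) - 1)
    {i : ℕ} (hi : 1 ≤ i) (hiN : i < N) :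
    |(x (i + 1) - x i) - 1 / ((N : ℝ) - 1) - F / 2 * ((N : ℝ) ^ 3)⁻¹ * ((N : ℝ) / 2 - i)|
      ≤ (4 * F ^ 2 + |F|) / ((N : ℝ) - 1) ^ 3 := by
  obtain ⟨m, rfl⟩ : ∃ m, N = m + 1 := ⟨N - 1, by omega⟩
  obtain ⟨k, rfl⟩ : ∃ k, i = k + 1 := ⟨i - 1, by omega⟩
  have hincr : ∀ j < m, x (j + 2) - x (j + 1) = (√(((x 2 - x 1) ^ 2)⁻¹ + j * F))⁻¹ :=
    fun j hj ↦ hx.increment_eq (by omega)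
  have hpos : ∀ j < m, 0 < ((x 2 - x 1) ^ 2)⁻¹ + j * F := fun j hj ↦ by
    rw [← hx.inv_sq_increment (by omega)]
    exact inv_pos.2 (pow_pos (hx.increment_pos (by omega)) 2)
  have hsum : ∑ j ∈ range m, (√(((x 2 - x 1) ^ 2)⁻¹ + j * F))⁻¹ = 1 := by
    rw [← hx.sum_increment (by omega), Nat.add_sub_cancel]
    exact sum_congr rfl fun j hj ↦ (hincr j (mem_range.1 hj)).symm
  push_cast at hF ⊢
  simp only [add_sub_cancel_right] at hF ⊢
  have hm := natCast_pos_of_sum_inv_sqrt_eq_one hsum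
  have hk : k < m := by omega
  have hk' : (k : ℝ) + 1 ≤ m := by exact_mod_cast hk
  have hc : |((m : ℝ) - 1) / 2 - k| ≤ m / 2 := by
    rw [abs_le]; constructor <;> linarith [(k.cast_nonneg : (0 : ℝ) ≤ k)]
  -- split off the cost of replacing `m⁻³` by `N⁻³` in the second-order term
  rw [hincr k hk, show ((m : ℝ) + 1) / 2 - (k + 1) = ((m : ℝ) - 1) / 2 - k by ring,
    ← sub_add_sub_cancel _ (F / (2 * m ^ 3) * (((m : ℝ) - 1) / 2 - k)), add_div]
  exact (abs_add_le _ _).trans (add_le_add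
    (abs_inv_sqrt_add_mul_sub_second_order_le hF hpos hsum hk)
    (abs_mul_inv_pow_three_sub_le hm hc F))

end IsFixedConfig

theorem div_pow_three_le_mul_inv_add_one_sq {C ε M : ℝ} (hC : 0 ≤ C) (hε : 0 < ε)
    (hM : 1 ≤ M) (hCM : 4 * C / ε ≤ M) : C / M ^ 3 ≤ ε * ((M + 1) ^ 2)⁻¹ := by
  rw [div_le_iff₀ hε] at hCM
  rw [← div_eq_mul_inv, div_le_div_iff₀ (by positivity) (by positivity)]
  have hsq : (M + 1) ^ 2 ≤ 4 * M ^ 2 := by nlinarith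
  nlinarith [mul_le_mul_of_nonneg_left hsq hC, mul_le_mul_of_nonneg_left hCM (sq_nonneg M)]

theorem second_order_increment_asymptotics_general (F : ℝ) :
    ∀ ε : ℝ, 0 < ε → ∃ N₀ : ℕ, ∀ N : ℕ, N₀ ≤ N → 3 ≤ N →
      ∀ x : ℕ → ℝ, IsFixedConfig N (fun _ => F) x →
        ∀ i, 2 ≤ i → i ≤ N - 1 →
          |(x (i + 1) - x i) - 1 / ((N : ℝ) - 1) -
              F / 2 * ((N : ℝ) ^ (3 : ℕ))⁻¹ * ((N : ℝ) / 2 - (i : ℝ))| ≤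
            ε * ((N : ℝ) ^ (2 : ℕ))⁻¹ := by
  intro ε hε
  set C := 4 * F ^ 2 + |F|
  refine ⟨⌈2 * |F| + 4 * C / ε⌉₊ + 1, fun N hN₀ hN x hx i hi hiN ↦ ?_⟩
  have hN₀' : ((⌈2 * |F| + 4 * C / ε⌉₊ + 1 : ℕ) : ℝ) ≤ N := by exact_mod_cast hN₀
  push_cast at hN₀'
  have hM : 2 * |F| + 4 * C / ε ≤ (N : ℝ) - 1 := by
    linarith [Nat.le_ceil (2 * |F| + 4 * C / ε)]
  have hCε : 0 ≤ 4 * C / ε := by positivity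
  have hN' : (3 : ℝ) ≤ N := by exact_mod_cast hN
  calc _ ≤ C / ((N : ℝ) - 1) ^ 3 := hx.abs_increment_sub_le (by linarith) (by omega) (by omega)
    _ ≤ ε * (((N : ℝ) - 1 + 1) ^ 2)⁻¹ :=
        div_pow_three_le_mul_inv_add_one_sq (by positivity) hε (by linarith)
          (by linarith [abs_nonneg F])
    _ = ε * ((N : ℝ) ^ (2 : ℕ))⁻¹ := by rw [sub_add_cancel]

/-- Second-order term of the increments for constant external force `F > 0`:
`(x_{i+1} - x_i) - 1/(N-1) ~ (F/2) N⁻³ (N/2 - i)` uniformly in `i`. -/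
theorem second_order_increment_asymptotics (F : ℝ) (hF : 0 < F) :
    ∀ ε : ℝ, 0 < ε → ∃ N₀ : ℕ, ∀ N : ℕ, N₀ ≤ N → 3 ≤ N →
      ∀ x : ℕ → ℝ, IsFixedConfig N (fun _ => F) x →
        ∀ i, 2 ≤ i → i ≤ N - 1 →
          |(x (i + 1) - x i) - 1 / ((N : ℝ) - 1) -
              F / 2 * ((N : ℝ) ^ (3 : ℕ))⁻¹ * ((N : ℝ) / 2 - (i : ℝ))| ≤
            ε * ((N : ℝ) ^ (2 : ℕ))⁻¹ :=
  second_order_increment_asymptotics_general F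
end
end
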